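/- A strong digraph D has a strong orientation (i.e., one can delete one arc from each 2-cycle so that the result is still strong) if and only if D has no bridge, where a bridge is a 2-cycle xyx such that D − {xy, yx} is disconnected. -/

import Mathlib

open Relation Set

variable {V : Type*}

/-- Reachability in a digraph using only arcs from the arc set `B`. -/
def ArcReach (B : Set (V × V)) : V → V → Prop :=
  Relation.ReflTransGen (fun x y => (x, y) ∈ B)

/-- A digraph, given by its arc set on vertex type `V`, is strongly connected. -/
def IsStrong (A : Set (V × V)) : Prop :=
  ∀ u v : V, ArcReach A u v

/-- `(W, B)` is an `S`-strong subgraph of the digraph with arc set `A`: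
a strongly connected subdigraph whose vertex set contains `S`. -/
def SStrongSub (A : Set (V × V)) (S W : Set V) (B : Set (V × V)) : Prop :=
  B ⊆ A ∧ S ⊆ W ∧ (∀ e ∈ B, e.1 ∈ W ∧ e.2 ∈ W) ∧
    ∀ u ∈ W, ∀ v ∈ W, ArcReach B u v

/-- `λ_S(D)`: the maximum number of pairwise arc-disjoint `S`-strong subgraphs. -/
noncomputable def lamS (A : Set (V × V)) (S : Set V) : ℕ :=
  sSup {t | ∃ (W : Fin t → Set V) (B : Fin t → Set (V × V)),
    (∀ i, SStrongSub A S (W i) (B i)) ∧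
    ∀ i j, i ≠ j → Disjoint (B i) (B j)}

/-- `κ_S(D)`: the maximum number of pairwise internally disjoint
(arc-disjoint, vertex sets meeting exactly in `S`) `S`-strong subgraphs. -/
noncomputable def kapS (A : Set (V × V)) (S : Set V) : ℕ :=
  sSup {t | ∃ (W : Fin t → Set V) (B : Fin t → Set (V × V)),
    (∀ i, SStrongSub A S (W i) (B i)) ∧
    (∀ i j, i ≠ j → Disjoint (B i) (B j)) ∧
    ∀ i j, i ≠ j → W i ∩ W j = S}

/-- Strong subgraph `k`-arc-connectivity `λ_k(D)`. -/
noncomputable def lamK [Fintype V] (A : Set (V × V)) (k : ℕ) : ℕ :=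
  sInf {m | ∃ S : Finset V, S.card = k ∧ m = lamS A ↑S}

/-- Strong subgraph `k`-connectivity `κ_k(D)`. -/
noncomputable def kapK [Fintype V] (A : Set (V × V)) (k : ℕ) : ℕ :=
  sInf {m | ∃ S : Finset V, S.card = k ∧ m = kapS A ↑S}

/-- An arc set is (the arc set of) a digraph: no loops. -/
def IsDigraph {V : Type*} (A : Set (V × V)) : Prop := ∀ e ∈ A, e.1 ≠ e.2

/-- `O` is an orientation of the digraph `A`: it deletes exactly one arc from
each 2-cycle of `A` and keeps all other arcs. -/
def IsOrientationOf {V : Type*} (O A : Set (V × V)) : Prop :=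
  O ⊆ A ∧
  (∀ x y : V, (x, y) ∈ A → (y, x) ∈ A → ((x, y) ∈ O ↔ (y, x) ∉ O)) ∧
  (∀ x y : V, (x, y) ∈ A → (y, x) ∉ A → (x, y) ∈ O)

/-- Weak connectivity: the underlying undirected graph is connected. -/
def WeaklyConnected {V : Type*} (A : Set (V × V)) : Prop :=
  ∀ u v : V, Relation.ReflTransGen (fun x y => (x, y) ∈ A ∨ (y, x) ∈ A) u v

/-- The digraph has a bridge: a 2-cycle `xyx` whose removal disconnects the
underlying undirected graph. -/
def HasBridge {V : Type*} (A : Set (V × V)) : Prop :=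
  ∃ x y : V, x ≠ y ∧ (x, y) ∈ A ∧ (y, x) ∈ A ∧
    ¬ WeaklyConnected (A \ {(x, y), (y, x)})

/-!
In a strong orientation, the arc `xy` kept from a 2-cycle lies on a cycle closed by a path from
`y` to `x`; that path uses neither `xy` nor `yx`, so `x` and `y` stay connected once both arcs
are removed, and then so does everything else.

Conversely, let `xyx` be a 2-cycle of a strong digraph `D` whose ends stay connected in
`B = D - {xy, yx}`. If neither `x → y` nor `y → x` were possible in `B`, every vertex would be
`B`-reachable from `x` or from `y` and would `B`-reach `x` or `y`; hence the `B`-out-set of `x`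
would be closed under arcs in both directions and contain `y`, a contradiction. So one arc of
the 2-cycle is redundant for strong connectivity. Deleting it creates no bridge, since its
reverse arc remains, and induction on the arc set finishes the proof.
-/

section Orientation

variable {A B F O : Set (V × V)} {x y u v : V}

def WeakReach (A : Set (V × V)) : V → V → Prop :=
  ReflTransGen fun a b => (a, b) ∈ A ∨ (b, a) ∈ A

theorem ArcReach.mono (h : A ⊆ B) (hr : ArcReach A u v) : ArcReach B u v :=
  ReflTransGen.mono (fun _ _ hab => h hab) _ _ hr

theorem ArcReach.lift (h : ∀ e ∈ A, ArcReach B e.1 e.2) (hr : ArcReach A u v) :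
    ArcReach B u v :=
  ReflTransGen.lift' id (fun a b hab => h (a, b) hab) u v hr

theorem ArcReach.weakReach (hr : ArcReach A u v) : WeakReach A u v :=
  ReflTransGen.mono (fun _ _ => Or.inl) _ _ hr

theorem ArcReach.diff_or_exists_last (hr : ArcReach A u v) :
    ArcReach (A \ F) u v ∨ ∃ e ∈ F, ArcReach (A \ F) e.2 v := by
  induction hr with
  | refl => exact Or.inl .refl
  | @tail b c _ hbc ih =>
    by_cases hF : (b, c) ∈ F
    · exact Or.inr ⟨(b, c), hF, .refl⟩
    · rcases ih with hub | ⟨e, he, heb⟩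
      · exact Or.inl (hub.tail ⟨hbc, hF⟩)
      · exact Or.inr ⟨e, he, heb.tail ⟨hbc, hF⟩⟩

theorem ArcReach.diff_or_exists_first (hr : ArcReach A u v) :
    ArcReach (A \ F) u v ∨ ∃ e ∈ F, ArcReach (A \ F) u e.1 := by
  induction hr using ReflTransGen.head_induction_on with
  | refl => exact Or.inl .refl
  | @head a c hac _ ih =>
    by_cases hF : (a, c) ∈ F
    · exact Or.inr ⟨(a, c), hF, .refl⟩
    · rcases ih with hcv | ⟨e, he, hce⟩
      · exact Or.inl (.head ⟨hac, hF⟩ hcv)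
      · exact Or.inr ⟨e, he, .head ⟨hac, hF⟩ hce⟩

theorem WeakReach.symm (hr : WeakReach A u v) : WeakReach A v u := by
  induction hr with
  | refl => exact .refl
  | tail _ hbc ih => exact .head hbc.symm ih

theorem WeakReach.lift (h : ∀ e ∈ A, WeakReach B e.1 e.2) (hr : WeakReach A u v) :
    WeakReach B u v := by
  induction hr with
  | refl => exact .refl
  | tail _ hbc ih => exact ih.trans (hbc.elim (h _) fun hcb => (h _ hcb).symm)

theorem WeaklyConnected.mono_swap (hA : WeaklyConnected A)
    (h : ∀ e ∈ A, e ∈ B ∨ e.swap ∈ B) : WeaklyConnected B := fun u v =>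
  WeakReach.lift (fun e he => .single (h e he)) (hA u v)

theorem weaklyConnected_diff_pair_iff (hA : WeaklyConnected A) :
    WeaklyConnected (A \ {(x, y), (y, x)}) ↔ WeakReach (A \ {(x, y), (y, x)}) x y := by
  refine ⟨fun h => h x y, fun hxy u v => WeakReach.lift (fun e he => ?_) (hA u v)⟩
  by_cases hF : e ∈ ({(x, y), (y, x)} : Set (V × V))
  · rcases hF with rfl | rfl
    exacts [hxy, hxy.symm]
  · exact .single (Or.inl ⟨he, hF⟩)

theorem IsStrong.diff_singleton {e : V × V} (hs : IsStrong A)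
    (he : ArcReach (A \ {e}) e.1 e.2) : IsStrong (A \ {e}) := fun u v =>
  (hs u v).lift fun a ha => by
    by_cases hae : a = e
    exacts [hae ▸ he, .single ⟨ha, hae⟩]

theorem IsStrong.arcReach_or_of_weakReach (hs : IsStrong A)
    (hw : WeakReach (A \ {(x, y), (y, x)}) x y) :
    ArcReach (A \ {(x, y), (y, x)}) x y ∨ ArcReach (A \ {(x, y), (y, x)}) y x := by
  set B := A \ {(x, y), (y, x)}
  by_contra! ⟨hxy, hyx⟩
  have from_x_or_y : ∀ v, ArcReach B x v ∨ ArcReach B y v := fun v => by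
    rcases (hs x v).diff_or_exists_last (F := {(x, y), (y, x)}) with h | ⟨e, he | he, h⟩ <;>
      subst_vars
    exacts [.inl h, .inr h, .inl h]
  have to_x : ∀ v, ArcReach B x v → ArcReach B v x := fun v hxv => by
    rcases (hs v x).diff_or_exists_first (F := {(x, y), (y, x)}) with h | ⟨e, he | he, h⟩ <;>
      subst_vars
    exacts [h, h, absurd (hxv.trans h) hxy]
  have out_x_closed : ∀ v, WeakReach B x v → ArcReach B x v := by
    intro v hv
    induction hv with
    | refl => exact .refl
    | @tail b c _ hbc ih =>
      refine hbc.elim ih.tail fun hcb => (from_x_or_y c).resolve_right fun hyc => ?_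
      exact hyx (hyc.trans (.head hcb (to_x b ih)))
  exact hxy (out_x_closed y hw)

theorem IsStrong.diff_singleton_or (hs : IsStrong A)
    (hw : WeakReach (A \ {(x, y), (y, x)}) x y) :
    IsStrong (A \ {(y, x)}) ∨ IsStrong (A \ {(x, y)}) := by
  have hB₁ : A \ {(x, y), (y, x)} ⊆ A \ {(y, x)} := sdiff_subset_sdiff_right (by simp)
  have hB₂ : A \ {(x, y), (y, x)} ⊆ A \ {(x, y)} := sdiff_subset_sdiff_right (by simp)
  rcases hs.arcReach_or_of_weakReach hw with h | h
  exacts [.inr (hs.diff_singleton (h.mono hB₂)), .inl (hs.diff_singleton (h.mono hB₁))]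

theorem IsOrientationOf.weakReach_diff_pair (hO : IsOrientationOf O A) (hOs : IsStrong O)
    (hxy : (x, y) ∈ O) (hyx : (y, x) ∈ A) : WeakReach (A \ {(x, y), (y, x)}) x y := by
  have hyxO : (y, x) ∉ O := (hO.2.1 x y (hO.1 hxy) hyx).mp hxy
  have hsub : O \ {(x, y)} ⊆ A \ {(x, y), (y, x)} := fun e ⟨he, hexy⟩ =>
    ⟨hO.1 he, by rintro (rfl | rfl) <;> contradiction⟩
  have hyx' : ArcReach (O \ {(x, y)}) y x := by
    rcases (hOs y x).diff_or_exists_last (F := {(x, y)}) with h | ⟨e, rfl, h⟩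
    exacts [h, h]
  exact (hyx'.mono hsub).weakReach.symm

theorem IsOrientationOf.not_hasBridge (hO : IsOrientationOf O A) (hOs : IsStrong O) :
    ¬ HasBridge A := by
  rintro ⟨x, y, -, hxy, hyx, hdisc⟩
  have hA : WeaklyConnected A := fun u v => ((hOs u v).mono hO.1).weakReach
  rw [weaklyConnected_diff_pair_iff hA] at hdisc
  by_cases hxyO : (x, y) ∈ O
  · exact hdisc (hO.weakReach_diff_pair hOs hxyO hyx)
  · have hyxO : (y, x) ∈ O := not_not.mp fun h => hxyO ((hO.2.1 x y hxy hyx).mpr h)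
    rw [pair_comm] at hdisc
    exact hdisc (hO.weakReach_diff_pair hOs hyxO hxy).symm

theorem isOrientationOf_self (h : ∀ x y, (x, y) ∈ A → (y, x) ∉ A) : IsOrientationOf A A :=
  ⟨subset_rfl, fun x y hxy hyx => absurd hyx (h x y hxy), fun _ _ hxy _ => hxy⟩

theorem IsOrientationOf.of_diff_singleton (hO : IsOrientationOf O (A \ {(y, x)})) (hne : x ≠ y)
    (hxy : (x, y) ∈ A) : IsOrientationOf O A := by
  obtain ⟨hsub, hcycle, hsingle⟩ := hO
  have hxy' : (x, y) ∈ A \ {(y, x)} := ⟨hxy, by simp [hne]⟩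
  have hxyO : (x, y) ∈ O := hsingle x y hxy' fun h => h.2 rfl
  have hyxO : (y, x) ∉ O := fun h => (hsub h).2 rfl
  refine ⟨hsub.trans sdiff_subset, fun u v huv hvu => ?_, fun u v huv hvu => ?_⟩
  · by_cases h : (u, v) = (y, x) ∨ (v, u) = (y, x)
    · rcases h with h | h <;> simp only [Prod.mk.injEq] at h <;> obtain ⟨rfl, rfl⟩ := h <;>
        simp [hxyO, hyxO]
    · push Not at h
      exact hcycle u v ⟨huv, h.1⟩ ⟨hvu, h.2⟩
  · refine hsingle u v ⟨huv, ?_⟩ fun h => hvu h.1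
    rintro ⟨⟩
    exact hvu hxy

theorem HasBridge.of_diff_singleton (hb : HasBridge (A \ {(y, x)})) (hne : x ≠ y)
    (hxy : (x, y) ∈ A) : HasBridge A := by
  obtain ⟨u, v, huv, ⟨hu, hu'⟩, ⟨hv, hv'⟩, hdisc⟩ := hb
  refine ⟨u, v, huv, hu, hv, fun hconn => hdisc (hconn.mono_swap fun e ⟨he, heuv⟩ => ?_)⟩
  by_cases hyx : e = (y, x)
  · subst hyx
    refine .inr ⟨⟨hxy, by simp [hne]⟩, ?_⟩
    rintro (h | h) <;> simp only [Prod.swap_prod_mk, Prod.mk.injEq] at h <;>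
      obtain ⟨rfl, rfl⟩ := h <;> simp_all
  · exact .inl ⟨⟨he, hyx⟩, heuv⟩

theorem exists_strong_orientation_of_not_hasBridge [Finite V] (hA : IsDigraph A)
    (hs : IsStrong A) (hb : ¬ HasBridge A) : ∃ O, IsOrientationOf O A ∧ IsStrong O := by
  induction A using WellFoundedLT.induction with
  | _ A ih =>
    have drop : ∀ a b, (a, b) ∈ A → (b, a) ∈ A → IsStrong (A \ {(b, a)}) →
        ∃ O, IsOrientationOf O A ∧ IsStrong O := by
      intro a b hab hba hs'
      have hne : a ≠ b := hA _ hab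
      obtain ⟨O, hO, hOs⟩ := ih _ (sdiff_singleton_ssubset.2 hba) (fun e he => hA e he.1) hs'
        fun h => hb (h.of_diff_singleton hne hab)
      exact ⟨O, hO.of_diff_singleton hne hab, hOs⟩
    by_cases hcycle : ∃ x y, (x, y) ∈ A ∧ (y, x) ∈ A
    · obtain ⟨x, y, hxy, hyx⟩ := hcycle
      have hw : WeakReach (A \ {(x, y), (y, x)}) x y := by
        by_contra h
        exact hb ⟨x, y, hA _ hxy, hxy, hyx, fun hc => h (hc x y)⟩
      rcases hs.diff_singleton_or hw with h | h
      exacts [drop x y hxy hyx h, drop y x hyx hxy h]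
    · push Not at hcycle
      exact ⟨A, isOrientationOf_self hcycle, hs⟩

end Orientation

/-- Boesch–Tindell: a strong digraph has a strong orientation
iff it has no bridge. -/
theorem strong_orientation_iff_no_bridge {V : Type*} [Fintype V]
    (A : Set (V × V)) (hA : IsDigraph A) (hs : IsStrong A) :
    (∃ O : Set (V × V), IsOrientationOf O A ∧ IsStrong O) ↔ ¬ HasBridge A :=
  ⟨fun ⟨_, hO, hOs⟩ => hO.not_hasBridge hOs, exists_strong_orientation_of_not_hasBridge hA hs⟩
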